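/- arXiv:2301.12878 — 6 statements merged into one kernel-verified Lean document; each statement's English description precedes it below -/
import Mathlib

section
/- There exists an absolute constant c > 0 with the following property. Let j ≥ 1 be an integer and let n₁, …, n_{j+1} be integers ≥ 2. Suppose there exist a prime number p and a positive integer n coprime to p such that p ≤ nᵢ for all 1 ≤ i ≤ j, n ≤ n_{j+1}, and |p^j + 1 − n| ≤ 2·p^{j/2}. Then the abelian group A = ∏_{i=1}^{j+1} ℤ/nᵢℤ contains a Sidon set S with |S| ≥ c·(p/2)^j. -/
/-!
Erdős–Turán construction. Put `b = ⌈p/2⌉` and let `m` be an odd prime with `2m ≤ n`, which by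
the Hasse-type bound on `n` and Bertrand's postulate may be taken with `p^j < 8m`. Send
`a < min(m, b^j)` to its `j` base-`b` digits in the first `j` coordinates and to `a² mod m` in the
last one. Every coordinate is large enough that adding two images never wraps around, so
`x₁ + x₂ = x₃ + x₄` among images forces `a₁ + a₂ = a₃ + a₄` and
`a₁² + a₂² ≡ a₃² + a₄² (mod m)`, whence `{a₁, a₂} = {a₃, a₄}`.
-/

open Finset

/-- A subset `S` of an abelian group is a *Sidon set* if every additive quadruple
`x₁ + x₂ = x₃ + x₄` in `S` satisfies `x₁ = x₃` or `x₁ = x₄`. -/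
def IsSidonSet {A : Type*} [AddCommGroup A] (S : Set A) : Prop :=
  ∀ x₁ ∈ S, ∀ x₂ ∈ S, ∀ x₃ ∈ S, ∀ x₄ ∈ S,
    x₁ + x₂ = x₃ + x₄ → x₁ = x₃ ∨ x₁ = x₄

theorem isSidonSet_singleton {A : Type*} [AddCommGroup A] (x : A) : IsSidonSet ({x} : Set A) := by
  rintro _ rfl _ - _ rfl _ - -
  exact Or.inl rfl

theorem exists_isSidonSet_card_eq {α A : Type*} [AddCommGroup A] {f : α → A} {s : Finset α}
    (hf : ∀ a₁ ∈ s, ∀ a₂ ∈ s, ∀ a₃ ∈ s, ∀ a₄ ∈ s,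
      f a₁ + f a₂ = f a₃ + f a₄ → a₁ = a₃ ∨ a₁ = a₄) :
    ∃ S : Finset A, IsSidonSet (S : Set A) ∧ S.card = s.card := by
  classical
  have hinj : Set.InjOn f s := fun u hu v hv huv =>
    (hf u hu u hu v hv v hv (by rw [huv])).elim id id
  refine ⟨s.image f, ?_, card_image_of_injOn hinj⟩
  simp only [coe_image, IsSidonSet, Set.forall_mem_image]
  intro a₁ h₁ a₂ h₂ a₃ h₃ a₄ h₄ h
  exact (hf a₁ h₁ a₂ h₂ a₃ h₃ a₄ h₄ h).imp (congrArg f) (congrArg f)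

theorem eq_or_eq_of_add_eq_add_of_sq_add_sq_eq {R : Type*} [CommRing R] [NoZeroDivisors R]
    (h2 : (2 : R) ≠ 0) {a b c d : R} (hsum : a + b = c + d) (hsq : a ^ 2 + b ^ 2 = c ^ 2 + d ^ 2) :
    a = c ∨ a = d := by
  have : (a - c) * (a - d) * 2 = 0 := by linear_combination (a - b - c - d) * hsum + hsq
  rcases mul_eq_zero.1 ((mul_eq_zero.1 this).resolve_right h2) with h | h
  · exact Or.inl (sub_eq_zero.1 h)
  · exact Or.inr (sub_eq_zero.1 h)

namespace Nat

theorem eq_or_eq_of_add_eq_add_of_sq_add_sq_modEq {m a₁ a₂ a₃ a₄ : ℕ} (hm : m.Prime) (hm2 : m ≠ 2)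
    (h₁ : a₁ < m) (h₃ : a₃ < m) (h₄ : a₄ < m) (hsum : a₁ + a₂ = a₃ + a₄)
    (hsq : a₁ ^ 2 + a₂ ^ 2 ≡ a₃ ^ 2 + a₄ ^ 2 [MOD m]) : a₁ = a₃ ∨ a₁ = a₄ := by
  have := Fact.mk hm
  have h2 : (2 : ZMod m) ≠ 0 := Ring.two_ne_zero (by rwa [ZMod.ringChar_zmod_n])
  have hsum' : (a₁ + a₂ : ZMod m) = a₃ + a₄ := by exact_mod_cast congrArg Nat.cast hsum
  have hsq' : (a₁ ^ 2 + a₂ ^ 2 : ZMod m) = a₃ ^ 2 + a₄ ^ 2 := by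
    exact_mod_cast (ZMod.natCast_eq_natCast_iff _ _ _).2 hsq
  refine (eq_or_eq_of_add_eq_add_of_sq_add_sq_eq h2 hsum' hsq').imp ?_ ?_ <;> intro h
  · exact ((ZMod.natCast_eq_natCast_iff _ _ _).1 h).eq_of_lt_of_lt h₁ h₃
  · exact ((ZMod.natCast_eq_natCast_iff _ _ _).1 h).eq_of_lt_of_lt h₁ h₄

theorem add_eq_add_of_cast_add_eq_add {N a b c d : ℕ} (hab : a + b < N) (hcd : c + d < N)
    (h : (a + b : ZMod N) = c + d) : a + b = c + d := by
  rw [← Nat.cast_add, ← Nat.cast_add, ZMod.natCast_eq_natCast_iff] at h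
  exact h.eq_of_lt_of_lt hab hcd

theorem sum_range_div_pow_mod_mul_pow {b a j : ℕ} (ha : a < b ^ j) :
    ∑ i ∈ range j, a / b ^ i % b * b ^ i = a := by
  induction j generalizing a with
  | zero => simp_all
  | succ j ih =>
    have hb : 0 < b := Nat.pos_of_ne_zero (by rintro rfl; simp at ha)
    have hdiv (i : ℕ) : a / b ^ (i + 1) = a / b / b ^ i := by
      rw [Nat.div_div_eq_div_mul, pow_succ']
    calc ∑ i ∈ range (j + 1), a / b ^ i % b * b ^ i
        = (∑ i ∈ range j, a / b / b ^ i % b * b ^ i) * b + a % b := by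
          simp_rw [sum_range_succ', hdiv, sum_mul, pow_succ, mul_assoc, pow_zero, Nat.div_one,
            mul_one]
      _ = a := by
          rw [ih (by rwa [Nat.div_lt_iff_lt_mul hb, ← pow_succ]), Nat.div_add_mod']

theorem add_eq_add_of_digit_add_eq {b j a₁ a₂ a₃ a₄ : ℕ} (h₁ : a₁ < b ^ j) (h₂ : a₂ < b ^ j)
    (h₃ : a₃ < b ^ j) (h₄ : a₄ < b ^ j)
    (h : ∀ i < j, a₁ / b ^ i % b + a₂ / b ^ i % b = a₃ / b ^ i % b + a₄ / b ^ i % b) :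
    a₁ + a₂ = a₃ + a₄ := by
  rw [← sum_range_div_pow_mod_mul_pow h₁, ← sum_range_div_pow_mod_mul_pow h₂,
    ← sum_range_div_pow_mod_mul_pow h₃, ← sum_range_div_pow_mod_mul_pow h₄,
    ← sum_add_distrib, ← sum_add_distrib]
  refine sum_congr rfl fun i hi => ?_
  rw [← add_mul, ← add_mul, h i (mem_range.1 hi)]

theorem exists_prime_ne_two_two_mul_le_lt_four_mul {n : ℕ} (hn : 8 ≤ n) :
    ∃ m, m.Prime ∧ m ≠ 2 ∧ 2 * m ≤ n ∧ n < 4 * m := by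
  obtain ⟨m, hm, hlt, hle⟩ := Nat.exists_prime_lt_and_le_two_mul (n / 4) (by omega)
  exact ⟨m, hm, by omega, by omega, by omega⟩

end Nat

def sidonEmbedding {j : ℕ} (N : Fin (j + 1) → ℕ) (b m a : ℕ) : ∀ i, ZMod (N i) :=
  Fin.snoc (α := fun i => ZMod (N i)) (fun i => ((a / b ^ (i : ℕ) % b : ℕ) : ZMod (N i.castSucc)))
    ((a ^ 2 % m : ℕ) : ZMod (N (Fin.last j)))

theorem sidonEmbedding_add_eq_add {j b m a₁ a₂ a₃ a₄ : ℕ} {N : Fin (j + 1) → ℕ}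
    (hb : ∀ i : Fin j, 2 * b ≤ N i.castSucc + 1) (hm : 0 < m) (hmN : 2 * m ≤ N (Fin.last j))
    (h₁ : a₁ < b ^ j) (h₂ : a₂ < b ^ j) (h₃ : a₃ < b ^ j) (h₄ : a₄ < b ^ j)
    (h : sidonEmbedding N b m a₁ + sidonEmbedding N b m a₂ =
      sidonEmbedding N b m a₃ + sidonEmbedding N b m a₄) :
    a₁ + a₂ = a₃ + a₄ ∧ a₁ ^ 2 + a₂ ^ 2 ≡ a₃ ^ 2 + a₄ ^ 2 [MOD m] := by
  constructor
  · refine Nat.add_eq_add_of_digit_add_eq h₁ h₂ h₃ h₄ fun i hi => ?_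
    have hb0 : 0 < b := Nat.pos_of_ne_zero (by rintro rfl; simp [zero_pow (by omega : j ≠ 0)] at h₁)
    have hdigit (a : ℕ) : a / b ^ i % b < b := Nat.mod_lt _ hb0
    have hi' := congrFun h (Fin.castSucc ⟨i, hi⟩)
    simp only [Pi.add_apply, sidonEmbedding, Fin.snoc_castSucc] at hi'
    have := hb ⟨i, hi⟩
    exact Nat.add_eq_add_of_cast_add_eq_add
      (by linarith [hdigit a₁, hdigit a₂]) (by linarith [hdigit a₃, hdigit a₄]) hi'
  · have hsq (a : ℕ) : a ^ 2 % m < m := Nat.mod_lt _ hm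
    have hl := congrFun h (Fin.last j)
    simp only [Pi.add_apply, sidonEmbedding, Fin.snoc_last] at hl
    have := Nat.add_eq_add_of_cast_add_eq_add
      (by linarith [hsq a₁, hsq a₂]) (by linarith [hsq a₃, hsq a₄]) hl
    rw [Nat.ModEq, Nat.add_mod, this, ← Nat.add_mod]

theorem exists_isSidonSet_card_eq_min {j b m : ℕ} (N : Fin (j + 1) → ℕ) (hm : m.Prime)
    (hm2 : m ≠ 2) (hb : ∀ i : Fin j, 2 * b ≤ N i.castSucc + 1) (hmN : 2 * m ≤ N (Fin.last j)) :
    ∃ S : Finset (∀ i, ZMod (N i)), IsSidonSet (S : Set (∀ i, ZMod (N i))) ∧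
      S.card = min m (b ^ j) := by
  rw [← card_range (min m (b ^ j))]
  refine exists_isSidonSet_card_eq (f := sidonEmbedding N b m) ?_
  simp only [mem_range, lt_min_iff]
  intro a₁ h₁ a₂ h₂ a₃ h₃ a₄ h₄ h
  obtain ⟨hsum, hsq⟩ :=
    sidonEmbedding_add_eq_add hb hm.pos hmN h₁.2 h₂.2 h₃.2 h₄.2 h
  exact Nat.eq_or_eq_of_add_eq_add_of_sq_add_sq_modEq hm hm2 h₁.1 h₃.1 h₄.1 hsum hsq

theorem add_two_le_two_mul_of_abs_le {x y : ℝ} (hx : 16 ≤ x) (h : |x + 1 - y| ≤ 2 * √x) :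
    x + 2 ≤ 2 * y := by
  have h4 : 4 ≤ √x := by
    rw [show (4 : ℝ) = √16 by rw [show (16 : ℝ) = 4 ^ 2 by norm_num, Real.sqrt_sq (by norm_num)]]
    exact Real.sqrt_le_sqrt hx
  nlinarith [Real.sq_sqrt (show 0 ≤ x by linarith), (abs_le.1 h).2]

theorem div_two_pow_le_half_pow {x : ℝ} (hx : 0 ≤ x) {j : ℕ} (hj : j ≠ 0) :
    (x / 2) ^ j ≤ x ^ j / 2 := by
  rw [div_pow]
  exact div_le_div_of_nonneg_left (by positivity) (by norm_num) (le_self_pow₀ (by norm_num) hj)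

theorem div_two_pow_le_eight_mul_min {j p b m : ℕ} (hj : j ≠ 0) (hpb : p ≤ 2 * b)
    (hpm : (p : ℝ) ^ j ≤ 8 * m) : ((p : ℝ) / 2) ^ j ≤ 8 * min m (b ^ j) := by
  have hpb' : (p : ℝ) / 2 ≤ b := by
    rw [div_le_iff₀ (by norm_num)]
    exact_mod_cast (by omega : p ≤ b * 2)
  rw [Nat.cast_min, Nat.cast_pow, mul_min_of_nonneg _ _ (by norm_num)]
  refine le_min (by linarith [div_two_pow_le_half_pow (Nat.cast_nonneg p) hj]) ?_
  linarith [pow_le_pow_left₀ (by positivity) hpb' j, pow_nonneg (by positivity : (0 : ℝ) ≤ p / 2) j]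

/-- There is an absolute constant `c > 0` such that: for any `j ≥ 1`, any integers
`n₁, …, n_{j+1} ≥ 2`, any prime `p` and any positive integer `n` coprime to `p`
with `p ≤ nᵢ` for `1 ≤ i ≤ j`, `n ≤ n_{j+1}` and `|p^j + 1 - n| ≤ 2 p^{j/2}`, the
abelian group `A = ∏ ℤ/nᵢℤ` contains a Sidon set of size at least `c (p/2)^j`. -/
theorem exists_sidon_in_products :
    ∃ c : ℝ, 0 < c ∧
      ∀ (j : ℕ), 1 ≤ j → ∀ (N : Fin (j + 1) → ℕ), (∀ i, 2 ≤ N i) →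
        ∀ (p n : ℕ), p.Prime → 0 < n → Nat.Coprime n p →
          (∀ i : Fin j, p ≤ N i.castSucc) → n ≤ N (Fin.last j) →
          |(p : ℝ) ^ j + 1 - (n : ℝ)| ≤ 2 * (p : ℝ) ^ ((j : ℝ) / 2) →
          ∃ S : Finset (∀ i, ZMod (N i)),
            IsSidonSet (S : Set (∀ i, ZMod (N i))) ∧
            c * ((p : ℝ) / 2) ^ j ≤ (S.card : ℝ) := by
  refine ⟨1 / 8, by norm_num, fun j hj N _ p n hp _ _ hpN hnN habs => ?_⟩
  by_cases hsmall : (p : ℝ) ^ j < 16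
  · refine ⟨{0}, by simpa using isSidonSet_singleton 0, ?_⟩
    rw [card_singleton, Nat.cast_one]
    linarith [div_two_pow_le_half_pow (Nat.cast_nonneg p) (by omega : j ≠ 0)]
  push Not at hsmall
  have hsqrt : (p : ℝ) ^ ((j : ℝ) / 2) = √((p : ℝ) ^ j) := by
    rw [Real.sqrt_eq_rpow, ← Real.rpow_natCast, ← Real.rpow_mul (by positivity), mul_one_div]
  have hn : (p : ℝ) ^ j + 2 ≤ 2 * n := add_two_le_two_mul_of_abs_le hsmall (hsqrt ▸ habs)
  have hn8 : 8 ≤ n := by exact_mod_cast (by linarith : (8 : ℝ) ≤ n)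
  obtain ⟨m, hm, hm2, hmn, hnm⟩ := Nat.exists_prime_ne_two_two_mul_le_lt_four_mul hn8
  obtain ⟨S, hS, hcard⟩ := exists_isSidonSet_card_eq_min (b := (p + 1) / 2) N hm hm2
    (fun i => by have := hpN i; omega) (hmn.trans hnN)
  refine ⟨S, hS, ?_⟩
  have hnm' : (n : ℝ) < 4 * m := by exact_mod_cast hnm
  have := div_two_pow_le_eight_mul_min (j := j) (m := m) (by omega)
    (by omega : p ≤ 2 * ((p + 1) / 2)) (by linarith)
  rw [hcard]
  linarith
end

section
/- Let k be a field. Then the set S = {(x, 1−x) : x ∈ k, x ≠ 0, x ≠ 1} is a Sidon set in the abelian group kˣ × kˣ; that is, if x₁, x₂, x₃, x₄ ∈ k \ {0,1} satisfy x₁·x₂ = x₃·x₄ and (1−x₁)·(1−x₂) = (1−x₃)·(1−x₄), then x₁ = x₃ or x₁ = x₄. -/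
/-!
Write the points as `(xᵢ, 1 - xᵢ)`. The first coordinates give `x₁ x₂ = x₃ x₄`, and expanding the
second ones, `(1 - x₁)(1 - x₂) = (1 - x₃)(1 - x₄)`, then gives `x₁ + x₂ = x₃ + x₄`. So `x₁, x₂` and
`x₃, x₄` are the roots of one monic quadratic, whence `x₁ ∈ {x₃, x₄}`; and a point `(x, 1 - x)` is
determined by `x`.
-/

/-- A subset `S` of a multiplicatively-written abelian group is a *Sidon set* if
every quadruple `x₁ * x₂ = x₃ * x₄` in `S` satisfies `x₁ = x₃` or `x₁ = x₄`. -/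
def IsMulSidonSet {G : Type*} [CommGroup G] (S : Set G) : Prop :=
  ∀ x₁ ∈ S, ∀ x₂ ∈ S, ∀ x₃ ∈ S, ∀ x₄ ∈ S,
    x₁ * x₂ = x₃ * x₄ → x₁ = x₃ ∨ x₁ = x₄

section CommRing

variable {R : Type*} [CommRing R] {a b c d : R}

theorem eq_or_eq_of_add_eq_add_of_mul_eq_mul [NoZeroDivisors R]
    (hsum : a + b = c + d) (hprod : a * b = c * d) : a = c ∨ a = d := by
  have hroot : (a - c) * (a - d) = 0 := by linear_combination a * hsum - hprod
  simpa only [sub_eq_zero] using mul_eq_zero.1 hroot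

theorem add_eq_add_of_mul_eq_mul_of_one_sub_mul_one_sub_eq (hprod : a * b = c * d)
    (h : (1 - a) * (1 - b) = (1 - c) * (1 - d)) : a + b = c + d := by
  linear_combination hprod - h

theorem eq_or_eq_of_mul_eq_mul_of_one_sub_mul_one_sub_eq [NoZeroDivisors R]
    (hprod : a * b = c * d) (h : (1 - a) * (1 - b) = (1 - c) * (1 - d)) : a = c ∨ a = d :=
  eq_or_eq_of_add_eq_add_of_mul_eq_mul
    (add_eq_add_of_mul_eq_mul_of_one_sub_mul_one_sub_eq hprod h) hprod

end CommRing

theorem Units.prod_eq_of_val_fst_eq_of_snd_eq_one_sub_fst {R : Type*} [Ring R] {p q : Rˣ × Rˣ}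
    (hp : (p.2 : R) = 1 - p.1) (hq : (q.2 : R) = 1 - q.1) (h : (p.1 : R) = q.1) : p = q :=
  Prod.ext (Units.ext h) (Units.ext (by rw [hp, hq, h]))

/-- For any field `k`, the set `{(x, 1 - x) : x ∈ k, x ≠ 0, x ≠ 1}` is a Sidon set
in the abelian group `kˣ × kˣ`. -/
theorem erdos_turan_sidon (k : Type*) [Field k] :
    IsMulSidonSet {p : kˣ × kˣ | (p.2 : k) = 1 - (p.1 : k)} := by
  intro p₁ h₁ p₂ h₂ p₃ h₃ p₄ h₄ hmul
  obtain ⟨hfst, hsnd⟩ := Prod.ext_iff.1 hmul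
  have hprod : (p₁.1 : k) * p₂.1 = p₃.1 * p₄.1 := Units.ext_iff.1 hfst
  have hprod' : (1 - p₁.1 : k) * (1 - p₂.1) = (1 - p₃.1) * (1 - p₄.1) := by
    rw [← h₁, ← h₂, ← h₃, ← h₄]
    exact Units.ext_iff.1 hsnd
  exact (eq_or_eq_of_mul_eq_mul_of_one_sub_mul_one_sub_eq hprod hprod').imp
    (Units.prod_eq_of_val_fst_eq_of_snd_eq_one_sub_fst h₁ h₃)
    (Units.prod_eq_of_val_fst_eq_of_snd_eq_one_sub_fst h₁ h₄)
end

section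
/- Let k ⊆ K be a field extension and let θ ∈ K be such that 1, θ, θ² are linearly independent over k. Consider the quotient group G = Kˣ/kˣ of the multiplicative group of K by the image of kˣ. Then the image in G of the set {aθ + b : a, b ∈ k, (a,b) ≠ (0,0)} is a Sidon set in G. (This is Singer's construction, to which the paper's Sidon set S₄, arising from the modulus (a)+(b)+(c) on ℙ¹ with a, b, c the roots of an irreducible cubic, corresponds.) -/
lemma exists_proportional_of_mul_sub_mul_eq_zero {k : Type*} [Field k] {a b a' b' : k}
    (h : ¬(a = 0 ∧ b = 0)) (h' : ¬(a' = 0 ∧ b' = 0)) (hd : a * b' - a' * b = 0) :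
    ∃ l : k, l ≠ 0 ∧ a = l * a' ∧ b = l * b' := by
  by_cases ha' : a' = 0
  · have hb' : b' ≠ 0 := fun hb' => h' ⟨ha', hb'⟩
    have ha : a = 0 := by simpa [ha', hb'] using hd
    have hb : b ≠ 0 := fun hb => h ⟨ha, hb⟩
    exact ⟨b / b', div_ne_zero hb hb', by simp [ha, ha'], by field_simp⟩
  · have ha : a ≠ 0 := by
      rintro rfl
      exact h ⟨rfl, by simpa [ha'] using hd⟩
    refine ⟨a / a', div_ne_zero ha ha', by field_simp, ?_⟩
    field_simp
    linear_combination -hd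

section FieldExtension

variable {k K : Type*} [Field k] [Field K] [Algebra k K]

lemma mk_eq_mk_iff_exists_algebraMap_mul {u v : Kˣ} :
    (QuotientGroup.mk u : Kˣ ⧸ (Units.map (algebraMap k K).toMonoidHom).range) =
        QuotientGroup.mk v ↔
      ∃ c : k, c ≠ 0 ∧ (v : K) = algebraMap k K c * u := by
  rw [QuotientGroup.eq]
  constructor
  · rintro ⟨c, hc⟩
    refine ⟨c, c.ne_zero, ?_⟩
    have := congrArg Units.val hc
    simp only [Units.coe_map, MonoidHom.coe_coe, RingHom.toMonoidHom_eq_coe, Units.val_mul,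
      Units.val_inv_eq_inv_val] at this
    rw [this]
    field_simp
  · rintro ⟨c, hc, hv⟩
    refine ⟨Units.mk0 c hc, Units.ext ?_⟩
    simp only [Units.coe_map, MonoidHom.coe_coe, RingHom.toMonoidHom_eq_coe, Units.val_mul,
      Units.val_inv_eq_inv_val, Units.val_mk0, hv]
    field_simp

lemma eq_of_linearIndependent_one_self_sq {θ : K} (hθ : LinearIndependent k ![1, θ, θ ^ 2])
    {x₀ x₁ x₂ y₀ y₁ y₂ : k}
    (h : algebraMap k K x₀ + algebraMap k K x₁ * θ + algebraMap k K x₂ * θ ^ 2 =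
      algebraMap k K y₀ + algebraMap k K y₁ * θ + algebraMap k K y₂ * θ ^ 2) :
    x₀ = y₀ ∧ x₁ = y₁ ∧ x₂ = y₂ := by
  have := Fintype.linearIndependent_iffₛ.mp hθ ![x₀, x₁, x₂] ![y₀, y₁, y₂]
    (by simpa [Fin.sum_univ_three, Algebra.smul_def] using h)
  exact ⟨this 0, this 1, this 2⟩

lemma mul_sub_mul_mul_mul_sub_mul_eq_zero {θ : K} (hθ : LinearIndependent k ![1, θ, θ ^ 2])
    {c a₁ b₁ a₂ b₂ a₃ b₃ a₄ b₄ : k}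
    (h : algebraMap k K c * ((algebraMap k K a₁ * θ + algebraMap k K b₁) *
        (algebraMap k K a₂ * θ + algebraMap k K b₂)) =
      (algebraMap k K a₃ * θ + algebraMap k K b₃) * (algebraMap k K a₄ * θ + algebraMap k K b₄)) :
    (a₁ * b₃ - a₃ * b₁) * (a₁ * b₄ - a₄ * b₁) = 0 := by
  obtain ⟨h₀, h₁, h₂⟩ := eq_of_linearIndependent_one_self_sq hθ
    (x₀ := c * (b₁ * b₂)) (x₁ := c * (a₁ * b₂ + a₂ * b₁)) (x₂ := c * (a₁ * a₂))
    (y₀ := b₃ * b₄) (y₁ := a₃ * b₄ + a₄ * b₃) (y₂ := a₃ * a₄)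
    (by simp only [map_add, map_mul]; linear_combination h)
  linear_combination (-a₁ ^ 2) * h₀ + a₁ * b₁ * h₁ - b₁ ^ 2 * h₂

lemma mk_eq_mk_of_mul_sub_mul_eq_zero {θ : K} {a b a' b' : k}
    (h : ¬(a = 0 ∧ b = 0)) (h' : ¬(a' = 0 ∧ b' = 0)) (hd : a * b' - a' * b = 0)
    {u v : Kˣ} (hu : (u : K) = algebraMap k K a * θ + algebraMap k K b)
    (hv : (v : K) = algebraMap k K a' * θ + algebraMap k K b') :
    (QuotientGroup.mk u : Kˣ ⧸ (Units.map (algebraMap k K).toMonoidHom).range) =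
      QuotientGroup.mk v := by
  obtain ⟨l, hl, rfl, rfl⟩ := exists_proportional_of_mul_sub_mul_eq_zero h h' hd
  refine (mk_eq_mk_iff_exists_algebraMap_mul.mpr ⟨l, hl, ?_⟩).symm
  rw [hu, hv, map_mul, map_mul]
  ring

end FieldExtension

/-- Singer's construction: if `k ⊆ K` is a field extension and `θ ∈ K` is such that
`1, θ, θ²` are linearly independent over `k`, then the image of
`{aθ + b : (a, b) ≠ (0, 0)}` in the quotient group `Kˣ/kˣ` is a Sidon set. -/
theorem singer_sidon {k K : Type*} [Field k] [Field K] [Algebra k K]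
    (θ : K) (hθ : LinearIndependent k ![1, θ, θ ^ 2]) :
    IsMulSidonSet
      {g : Kˣ ⧸ (Units.map (algebraMap k K).toMonoidHom).range |
        ∃ a b : k, ¬(a = 0 ∧ b = 0) ∧
          ∃ u : Kˣ, (u : K) = algebraMap k K a * θ + algebraMap k K b ∧
            g = QuotientGroup.mk u} := by
  rintro _ ⟨a₁, b₁, h₁, u₁, hu₁, rfl⟩ _ ⟨a₂, b₂, h₂, u₂, hu₂, rfl⟩
    _ ⟨a₃, b₃, h₃, u₃, hu₃, rfl⟩ _ ⟨a₄, b₄, h₄, u₄, hu₄, rfl⟩ heq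
  rw [← QuotientGroup.mk_mul, ← QuotientGroup.mk_mul,
    mk_eq_mk_iff_exists_algebraMap_mul] at heq
  obtain ⟨c, -, hc⟩ := heq
  push_cast at hc
  rw [hu₁, hu₂, hu₃, hu₄] at hc
  rcases mul_eq_zero.mp (mul_sub_mul_mul_mul_sub_mul_eq_zero hθ hc.symm) with h₁₃ | h₁₄
  · exact .inl (mk_eq_mk_of_mul_sub_mul_eq_zero h₁ h₃ h₁₃ hu₁ hu₃)
  · exact .inr (mk_eq_mk_of_mul_sub_mul_eq_zero h₁ h₄ h₁₄ hu₁ hu₄)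
end

section
/- Let E be an elliptic curve over a field F given by a Weierstrass equation y² + a₁xy + a₃y = x³ + a₂x² + a₄x + a₆ with nonzero discriminant, and let P₁, P₂, P₃, P₄ be affine (non-identity) points of E(F) satisfying P₁ + P₂ = P₃ + P₄ under the group law. Then L(P₁,P₂) is parallel to L(P₃,P₄) if and only if either {P₁,P₂} = {P₃,P₄} as unordered pairs, or P₂ = −P₁. -/
open scoped Classical

/-- The direction of the line `L(P,Q)` associated to two affine points
`P = (x₁, y₁)` and `Q = (x₂, y₂)` of a Weierstrass curve `W`: the line through `P`
and `Q` if `P ≠ Q`, and the tangent line to `W` at `P` if `P = Q`. The value is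
`none` if this line is vertical and `some m` if it is non-vertical with slope `m`
(the tangent line at `(x₁, y₁)` is vertical iff `2y₁ + a₁x₁ + a₃ = 0`). -/
noncomputable def lineDir {F : Type*} [Field F] (W : WeierstrassCurve.Affine F)
    (x₁ y₁ x₂ y₂ : F) : Option F :=
  if (x₁, y₁) = (x₂, y₂) then
    if 2 * y₁ + W.a₁ * x₁ + W.a₃ = 0 then none
    else some ((3 * x₁ ^ 2 + 2 * W.a₂ * x₁ + W.a₄ - W.a₁ * y₁) /
      (2 * y₁ + W.a₁ * x₁ + W.a₃))
  else if x₁ = x₂ then none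
  else some ((y₂ - y₁) / (x₂ - x₁))

/-! If `P₁ + P₂ = P₃ + P₄ = S` and `S ≠ 0`, the two chords are non-vertical and both meet the
curve a third time at `-S`. If they have the same slope, they are therefore the same line, so
the cubic cutting out their intersections with the curve is the same; cancelling the common root
`x(-S)` shows that `{x₁, x₂} = {x₃, x₄}`, and the points are recovered from their abscissae on
the common line. If `S = 0`, both lines are vertical. -/

lemma Polynomial.pair_eq_pair_of_X_sub_C_mul_X_sub_C_eq {R : Type*} [CommRing R] [IsDomain R]
    {a b c d : R} (h : (X - C a) * (X - C b) = (X - C c) * (X - C d)) :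
    ({a, b} : Set R) = {c, d} := by
  ext x
  have hx := congrArg (eval x) h
  simp only [eval_mul, eval_sub, eval_X, eval_C] at hx
  simp only [Set.mem_insert_iff, Set.mem_singleton_iff, ← sub_eq_zero (a := x), ← mul_eq_zero, hx]

section lineDir

open WeierstrassCurve.Affine

variable {F : Type*} [Field F] {W : WeierstrassCurve.Affine F}

lemma lineDir_comm (W : WeierstrassCurve.Affine F) (x₁ y₁ x₂ y₂ : F) :
    lineDir W x₁ y₁ x₂ y₂ = lineDir W x₂ y₂ x₁ y₁ := by
  by_cases hP : (x₁, y₁) = (x₂, y₂)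
  · obtain ⟨rfl, rfl⟩ := Prod.mk.inj hP
    rfl
  · rw [lineDir, lineDir, if_neg hP, if_neg (Ne.symm hP)]
    by_cases hx : x₁ = x₂
    · rw [if_pos hx, if_pos hx.symm]
    · rw [if_neg hx, if_neg (Ne.symm hx), ← neg_sub y₂, ← neg_sub x₂, neg_div_neg_eq]

lemma lineDir_eq_of_pair_eq {x₁ y₁ x₂ y₂ x₃ y₃ x₄ y₄ : F}
    (h : ({(x₁, y₁), (x₂, y₂)} : Set (F × F)) = {(x₃, y₃), (x₄, y₄)}) :
    lineDir W x₁ y₁ x₂ y₂ = lineDir W x₃ y₃ x₄ y₄ := by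
  rcases Set.pair_eq_pair_iff.mp h with ⟨h₁₃, h₂₄⟩ | ⟨h₁₄, h₂₃⟩
  · simp only [Prod.mk.injEq] at h₁₃ h₂₄
    rw [h₁₃.1, h₁₃.2, h₂₄.1, h₂₄.2]
  · simp only [Prod.mk.injEq] at h₁₄ h₂₃
    rw [h₁₄.1, h₁₄.2, h₂₃.1, h₂₃.2, lineDir_comm]

lemma lineDir_of_Y_eq {x₁ y₁ x₂ y₂ : F} (hx : x₁ = x₂) (hy : y₁ = W.negY x₂ y₂) :
    lineDir W x₁ y₁ x₂ y₂ = none := by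
  subst hx
  by_cases hP : (x₁, y₁) = (x₁, y₂)
  · obtain rfl : y₁ = y₂ := (Prod.mk.inj hP).2
    rw [lineDir, if_pos rfl, if_pos (by rw [negY] at hy; linear_combination hy)]
  · rw [lineDir, if_neg hP, if_pos rfl]

lemma lineDir_of_not_Y_eq {x₁ y₁ x₂ y₂ : F} (h₁ : W.Equation x₁ y₁) (h₂ : W.Equation x₂ y₂)
    (hxy : ¬(x₁ = x₂ ∧ y₁ = W.negY x₂ y₂)) :
    lineDir W x₁ y₁ x₂ y₂ = some (W.slope x₁ x₂ y₁ y₂) := by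
  by_cases hx : x₁ = x₂
  · have hy : y₁ ≠ W.negY x₂ y₂ := fun hy => hxy ⟨hx, hy⟩
    obtain rfl := hx
    obtain rfl : y₁ = y₂ := (Y_eq_of_X_eq h₁ h₂ rfl).resolve_right hy
    have hd : 2 * y₁ + W.a₁ * x₁ + W.a₃ ≠ 0 := fun hd => hy (by rw [negY]; linear_combination hd)
    rw [lineDir, if_pos rfl, if_neg hd, slope_of_Y_ne rfl hy, negY]
    ring_nf
  · rw [lineDir, if_neg (fun h => hx (Prod.mk.inj h).1), if_neg hx, slope_of_X_ne hx,
      ← neg_sub y₂, ← neg_sub x₂, neg_div_neg_eq]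

end lineDir

section chord

open Polynomial WeierstrassCurve.Affine WeierstrassCurve.Affine.Point

variable {F : Type*} [Field F] {W : WeierstrassCurve.Affine F}

lemma Y_eq_eval_linePolynomial_slope {x₁ y₁ x₂ y₂ : F} (h₁ : W.Equation x₁ y₁)
    (h₂ : W.Equation x₂ y₂) (hxy : ¬(x₁ = x₂ ∧ y₁ = W.negY x₂ y₂)) :
    y₂ = (linePolynomial x₁ y₁ (W.slope x₁ x₂ y₁ y₂)).eval x₂ := by
  simp only [linePolynomial, eval_add, eval_mul, eval_sub, eval_X, eval_C]
  by_cases hx : x₁ = x₂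
  · obtain rfl := hx
    obtain rfl : y₁ = y₂ := (Y_eq_of_X_eq h₁ h₂ rfl).resolve_right fun hy => hxy ⟨rfl, hy⟩
    ring
  · rw [slope_of_X_ne hx]
    field_simp [sub_ne_zero.mpr hx]
    ring

lemma pair_eq_image_linePolynomial {x₁ y₁ x₂ y₂ : F} (h₁ : W.Equation x₁ y₁)
    (h₂ : W.Equation x₂ y₂) (hxy : ¬(x₁ = x₂ ∧ y₁ = W.negY x₂ y₂)) :
    ({(x₁, y₁), (x₂, y₂)} : Set (F × F)) =
      (fun x => (x, (linePolynomial x₁ y₁ (W.slope x₁ x₂ y₁ y₂)).eval x)) '' {x₁, x₂} := by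
  rw [Set.image_pair, ← Y_eq_eval_linePolynomial_slope h₁ h₂ hxy]
  simp [linePolynomial]

lemma linePolynomial_eq_of_negAddY_eq {x₁ y₁ x₂ x₃ y₃ x₄ ℓ : F}
    (hX : W.addX x₁ x₂ ℓ = W.addX x₃ x₄ ℓ) (hY : W.negAddY x₁ x₂ y₁ ℓ = W.negAddY x₃ x₄ y₃ ℓ) :
    linePolynomial x₁ y₁ ℓ = linePolynomial x₃ y₃ ℓ := by
  rw [negAddY, negAddY, hX] at hY
  have hc : C (y₁ - ℓ * x₁) = (C (y₃ - ℓ * x₃) : F[X]) := congrArg C (by linear_combination hY)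
  simp only [linePolynomial, map_sub, map_mul] at hc ⊢
  linear_combination hc

lemma some_add_some_eq_zero_iff {x₁ y₁ x₂ y₂ : F} {h₁ : W.Nonsingular x₁ y₁}
    {h₂ : W.Nonsingular x₂ y₂} : some _ _ h₁ + some _ _ h₂ = 0 ↔ x₁ = x₂ ∧ y₁ = W.negY x₂ y₂ :=
  ⟨fun h => by_contra fun hxy => some_ne_zero _ ((add_some hxy).symm.trans h),
    fun hxy => add_of_Y_eq hxy.1 hxy.2⟩

lemma pair_eq_of_add_eq_of_slope_eq {x₁ y₁ x₂ y₂ x₃ y₃ x₄ y₄ : F}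
    {h₁ : W.Nonsingular x₁ y₁} {h₂ : W.Nonsingular x₂ y₂}
    {h₃ : W.Nonsingular x₃ y₃} {h₄ : W.Nonsingular x₄ y₄}
    (hxy₁ : ¬(x₁ = x₂ ∧ y₁ = W.negY x₂ y₂)) (hxy₂ : ¬(x₃ = x₄ ∧ y₃ = W.negY x₄ y₄))
    (hadd : some _ _ h₁ + some _ _ h₂ = some _ _ h₃ + some _ _ h₄)
    (hslope : W.slope x₁ x₂ y₁ y₂ = W.slope x₃ x₄ y₃ y₄) :
    ({(x₁, y₁), (x₂, y₂)} : Set (F × F)) = {(x₃, y₃), (x₄, y₄)} := by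
  rw [add_some hxy₁, add_some hxy₂, some.injEq, addY, addY] at hadd
  obtain ⟨hX, hY⟩ := hadd
  rw [hX, ← hslope] at hY
  rw [← hslope] at hX
  have hline := linePolynomial_eq_of_negAddY_eq hX <| by
    simpa only [negY, neg_inj, add_left_inj, sub_left_inj] using hY
  have hcubic := addPolynomial_slope h₃.1 h₄.1 hxy₂
  rw [← hslope, addPolynomial, ← hline, ← addPolynomial, addPolynomial_slope h₁.1 h₂.1 hxy₁,
    hX, neg_inj] at hcubic
  have hx := pair_eq_pair_of_X_sub_C_mul_X_sub_C_eq (mul_right_cancel₀ (X_sub_C_ne_zero _) hcubic)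
  rw [pair_eq_image_linePolynomial h₁.1 h₂.1 hxy₁, pair_eq_image_linePolynomial h₃.1 h₄.1 hxy₂,
    hx, ← hslope, hline]

end chord

theorem line_parallel_iff_general {F : Type*} [Field F] (W : WeierstrassCurve.Affine F)
    {x₁ y₁ x₂ y₂ x₃ y₃ x₄ y₄ : F}
    (h₁ : W.Nonsingular x₁ y₁) (h₂ : W.Nonsingular x₂ y₂)
    (h₃ : W.Nonsingular x₃ y₃) (h₄ : W.Nonsingular x₄ y₄)
    (hadd : WeierstrassCurve.Affine.Point.some _ _ h₁ + WeierstrassCurve.Affine.Point.some _ _ h₂ =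
      WeierstrassCurve.Affine.Point.some _ _ h₃ + WeierstrassCurve.Affine.Point.some _ _ h₄) :
    lineDir W x₁ y₁ x₂ y₂ = lineDir W x₃ y₃ x₄ y₄ ↔
      (({(x₁, y₁), (x₂, y₂)} : Set (F × F)) = {(x₃, y₃), (x₄, y₄)} ∨
        WeierstrassCurve.Affine.Point.some _ _ h₂ = -WeierstrassCurve.Affine.Point.some _ _ h₁) := by
  rw [← add_eq_zero_iff_eq_neg']
  refine ⟨fun hpar => or_iff_not_imp_right.mpr fun hsum₁ => ?_, ?_⟩
  · have hxy₁ := mt some_add_some_eq_zero_iff.mpr hsum₁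
    have hxy₂ := mt some_add_some_eq_zero_iff.mpr (hadd ▸ hsum₁)
    rw [lineDir_of_not_Y_eq h₁.1 h₂.1 hxy₁, lineDir_of_not_Y_eq h₃.1 h₄.1 hxy₂,
      Option.some_inj] at hpar
    exact pair_eq_of_add_eq_of_slope_eq hxy₁ hxy₂ hadd hpar
  · rintro (hpair | hsum₁)
    · exact lineDir_eq_of_pair_eq hpair
    · obtain ⟨hx₁, hy₁⟩ := some_add_some_eq_zero_iff.mp hsum₁
      obtain ⟨hx₃, hy₃⟩ := some_add_some_eq_zero_iff.mp (hadd ▸ hsum₁)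
      rw [lineDir_of_Y_eq hx₁ hy₁, lineDir_of_Y_eq hx₃ hy₃]

/-- Let `P₁, P₂, P₃, P₄` be affine points of an elliptic curve (a Weierstrass curve
with nonzero discriminant) with `P₁ + P₂ = P₃ + P₄`. Then the line `L(P₁,P₂)` is
parallel to `L(P₃,P₄)` (same direction: both vertical, or equal slopes) iff
`{P₁, P₂} = {P₃, P₄}` as unordered pairs or `P₂ = -P₁`. -/
theorem line_parallel_iff {F : Type*} [Field F] (W : WeierstrassCurve.Affine F)
    (hΔ : W.Δ ≠ 0) {x₁ y₁ x₂ y₂ x₃ y₃ x₄ y₄ : F}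
    (h₁ : W.Nonsingular x₁ y₁) (h₂ : W.Nonsingular x₂ y₂)
    (h₃ : W.Nonsingular x₃ y₃) (h₄ : W.Nonsingular x₄ y₄)
    (hadd : WeierstrassCurve.Affine.Point.some _ _ h₁ + WeierstrassCurve.Affine.Point.some _ _ h₂ =
      WeierstrassCurve.Affine.Point.some _ _ h₃ + WeierstrassCurve.Affine.Point.some _ _ h₄) :
    lineDir W x₁ y₁ x₂ y₂ = lineDir W x₃ y₃ x₄ y₄ ↔
      (({(x₁, y₁), (x₂, y₂)} : Set (F × F)) = {(x₃, y₃), (x₄, y₄)} ∨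
        WeierstrassCurve.Affine.Point.some _ _ h₂ = -WeierstrassCurve.Affine.Point.some _ _ h₁) :=
  line_parallel_iff_general W h₁ h₂ h₃ h₄ hadd
end

section
/- Let A be an abelian group without 2-torsion (i.e., 2x = 0 implies x = 0), and let S ⊆ A be a finite symmetric Sidon set with center a. Then there exists a Sidon set T ⊆ S with 2·|T| ≥ |S| − 1 (obtained by choosing one element of each pair {x, a − x} with 2x ≠ a). -/
/-- A subset `S` of an abelian group is a *symmetric Sidon set with center `a`* if
`S = a - S` and every additive quadruple `x₁ + x₂ = x₃ + x₄` in `S` satisfies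
`x₁ = x₃`, `x₁ = x₄`, or `x₂ = a - x₁`. -/
def IsSymmetricSidonSet {A : Type*} [AddCommGroup A] (S : Set A) (a : A) : Prop :=
  (∀ x : A, x ∈ S ↔ a - x ∈ S) ∧
    ∀ x₁ ∈ S, ∀ x₂ ∈ S, ∀ x₃ ∈ S, ∀ x₄ ∈ S,
      x₁ + x₂ = x₃ + x₄ → x₁ = x₃ ∨ x₁ = x₄ ∨ x₂ = a - x₁

open Finset

theorem Finset.exists_subset_card_le_of_involutive {α : Type*} [DecidableEq α] {f : α → α}
    (hf : Function.Involutive f) (S : Finset α) (hS : ∀ x ∈ S, f x ∈ S) :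
    ∃ T ⊆ S, (∀ x ∈ T, f x ∉ T) ∧ #S ≤ 2 * #T + #{x ∈ S | f x = x} := by
  let _ : LinearOrder α := WellOrderingRel.isWellOrder.linearOrder
  refine ⟨{x ∈ S | x < f x}, filter_subset _ _, fun x hx hfx => ?_, ?_⟩
  · simp only [mem_filter, hf x] at hx hfx
    exact lt_asymm hx.2 hfx.2
  · have hcover : S ⊆ {x ∈ S | x < f x} ∪ {x ∈ S | x < f x}.image f ∪ {x ∈ S | f x = x} := by
      intro x hx
      simp only [mem_union, mem_filter, mem_image]
      rcases lt_trichotomy x (f x) with h | h | h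
      · exact .inl (.inl ⟨hx, h⟩)
      · exact .inr ⟨hx, h.symm⟩
      · exact .inl (.inr ⟨f x, ⟨hS x hx, by rwa [hf x]⟩, hf x⟩)
    calc #S ≤ _ := card_le_card hcover
      _ ≤ _ := card_union_le _ _
      _ ≤ _ := by grw [card_union_le, card_image_le]; omega

theorem Finset.card_filter_sub_eq_self_le_one {A : Type*} [AddCommGroup A] [DecidableEq A]
    (h2 : ∀ x : A, x + x = 0 → x = 0) (a : A) (S : Finset A) :
    #{x ∈ S | a - x = x} ≤ 1 := by
  refine card_le_one.2 fun x hx y hy => ?_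
  rw [mem_filter, sub_eq_iff_eq_add] at hx hy
  exact sub_eq_zero.1 <| h2 _ <| by rw [sub_add_sub_comm, ← hx.2, ← hy.2, sub_self]

theorem IsSymmetricSidonSet.isSidonSet_of_subset {A : Type*} [AddCommGroup A] {S T : Set A}
    {a : A} (hS : IsSymmetricSidonSet S a) (hTS : T ⊆ S) (hT : ∀ x ∈ T, a - x ∉ T) :
    IsSidonSet T := by
  intro x₁ h₁ x₂ h₂ x₃ h₃ x₄ h₄ heq
  obtain h | h | h := hS.2 x₁ (hTS h₁) x₂ (hTS h₂) x₃ (hTS h₃) x₄ (hTS h₄) heq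
  · exact .inl h
  · exact .inr h
  · exact absurd (h ▸ h₂) (hT x₁ h₁)

/-- A finite symmetric Sidon set with center `a` in an abelian group without
`2`-torsion contains a Sidon subset `T` with `2 * |T| ≥ |S| - 1`. -/
theorem desymmetrize {A : Type*} [AddCommGroup A]
    (h2 : ∀ x : A, x + x = 0 → x = 0)
    (a : A) (S : Finset A) (hS : IsSymmetricSidonSet (S : Set A) a) :
    ∃ T : Finset A, T ⊆ S ∧ IsSidonSet (T : Set A) ∧
      (S.card : ℤ) - 1 ≤ 2 * T.card := by
  classical
  obtain ⟨T, hTS, hT, hcard⟩ := exists_subset_card_le_of_involutive (sub_sub_cancel a) S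
    fun x hx => (hS.1 x).1 hx
  refine ⟨T, hTS, hS.isSidonSet_of_subset (mod_cast hTS) (mod_cast hT), ?_⟩
  have := card_filter_sub_eq_self_le_one h2 a S
  omega
end

section
/- Let A be an abelian group whose 2-torsion subgroup {x ∈ A : 2x = 0} is finite of order t, let S ⊆ A be a symmetric Sidon set with center a, and let S′ be a finite subset of S. Then S′ contains a Sidon subset T with 2·|T| ≥ |S′| − t. -/
/-!
The points `x ∈ S'` with `x + x = a` form a translate of the `2`-torsion subgroup, so there are at
most `t` of them. The involution `x ↦ a - x` pairs up the remaining points; choosing at most one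
point from each orbit gives `T` with `|S'| - t ≤ 2 |T|`. Since `T` never contains both `x` and
`a - x`, the exceptional quadruples with `x₂ = a - x₁` allowed in `S` cannot occur in `T`.
-/

open Finset

theorem Function.Involutive.exists_subset_forall_notMem_card_le {α : Type*} [DecidableEq α]
    {σ : α → α} (hσ : Function.Involutive σ) (s : Finset α) :
    ∃ T ⊆ s, (∀ x ∈ T, σ x ∉ T) ∧ #{x ∈ s | σ x ≠ x} ≤ 2 * #T := by
  classical
  -- From each orbit `{x, σ x}` inside `s` keep the smaller point for a well-order on `α`.
  let r : α → α → Prop := WellOrderingRel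
  set T := s.filter fun x => σ x ∉ s ∨ r x (σ x) with hT
  have mem_T {x : α} : x ∈ T ↔ x ∈ s ∧ (σ x ∉ s ∨ r x (σ x)) := by rw [hT, mem_filter]
  refine ⟨T, filter_subset _ _, fun x hx hσx => ?_, ?_⟩
  · obtain ⟨hxs, hx⟩ := mem_T.1 hx
    obtain ⟨hσxs, hσx⟩ := mem_T.1 hσx
    rw [hσ x] at hσx
    exact asymm (hx.resolve_left (not_not.2 hσxs)) (hσx.resolve_left (not_not.2 hxs))
  have hcover : {x ∈ s | σ x ≠ x} ⊆ T ∪ T.image σ := by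
    intro x hx
    obtain ⟨hxs, hfix⟩ := mem_filter.1 hx
    by_cases hσxs : σ x ∈ s
    · rcases trichotomous_of r x (σ x) with h | h | h
      · exact mem_union_left _ (mem_T.2 ⟨hxs, Or.inr h⟩)
      · exact absurd h.symm hfix
      · refine mem_union_right _ (mem_image.2 ⟨σ x, mem_T.2 ⟨hσxs, Or.inr ?_⟩, hσ x⟩)
        rwa [hσ x]
    · exact mem_union_left _ (mem_T.2 ⟨hxs, Or.inl hσxs⟩)
  calc #{x ∈ s | σ x ≠ x} ≤ #(T ∪ T.image σ) := card_le_card hcover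
    _ ≤ #T + #(T.image σ) := card_union_le _ _
    _ ≤ #T + #T := Nat.add_le_add_left card_image_le _
    _ = 2 * #T := (two_mul _).symm

theorem Finset.card_filter_add_self_eq_le {A : Type*} [AddCommGroup A] [DecidableEq A]
    (h2 : {x : A | x + x = 0}.Finite) (s : Finset A) (a : A) :
    #{x ∈ s | x + x = a} ≤ {x : A | x + x = 0}.ncard := by
  obtain hempty | ⟨c, hc⟩ := (s.filter fun x => x + x = a).eq_empty_or_nonempty
  · simp [hempty]
  · rw [← Set.ncard_coe_finset]
    refine Set.ncard_le_ncard_of_injOn (· - c) (fun x hx => ?_) sub_left_injective.injOn h2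
    have hca := (mem_filter.1 hc).2
    have hxa := (mem_filter.1 (mem_coe.1 hx)).2
    change (x - c) + (x - c) = 0
    rw [sub_add_sub_comm, hxa, hca, sub_self]

/-- If the `2`-torsion subgroup of an abelian group `A` is finite of order `t`,
`S ⊆ A` is a symmetric Sidon set with center `a`, and `S'` is a finite subset of
`S`, then `S'` contains a Sidon subset `T` with `2 * |T| ≥ |S'| - t`. -/
theorem desymmetrize_torsion {A : Type*} [AddCommGroup A] (t : ℕ)
    (h2fin : {x : A | x + x = 0}.Finite) (h2card : {x : A | x + x = 0}.ncard = t)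
    (a : A) (S : Set A) (hS : IsSymmetricSidonSet S a)
    (S' : Finset A) (hS' : (S' : Set A) ⊆ S) :
    ∃ T : Finset A, T ⊆ S' ∧ IsSidonSet (T : Set A) ∧
      (S'.card : ℤ) - t ≤ 2 * T.card := by
  classical
  obtain ⟨T, hTS', hT, hcard⟩ :=
    Function.Involutive.exists_subset_forall_notMem_card_le (σ := (a - ·)) (sub_sub_cancel a) S'
  refine ⟨T, hTS', hS.isSidonSet_of_subset ((coe_subset.2 hTS').trans hS') hT, ?_⟩
  have hfixed : #{x ∈ S' | x + x = a} ≤ t := h2card ▸ S'.card_filter_add_self_eq_le h2fin a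
  have hmoved : {x ∈ S' | a - x ≠ x} = {x ∈ S' | ¬x + x = a} :=
    filter_congr fun x _ => by rw [ne_eq, sub_eq_iff_eq_add, eq_comm]
  have hsplit := S'.card_filter_add_card_filter_not (fun x => x + x = a)
  rw [hmoved] at hcard
  omega
end
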